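/- Let A_I = A_O = B_I = B_O = ℂ². The set W^CNS of causally non-separable process matrices on A_I⊗A_O⊗B_I⊗B_O is not convex: there exist causally non-separable process matrices whose convex combination is a causally separable process matrix. -/

import Mathlib

open scoped ComplexOrder Matrix

namespace ProcessMatrices

/-- The trace norm (sum of singular values) of a complex square matrix. -/
noncomputable def traceNorm {n : Type} [Fintype n] [DecidableEq n] (X : Matrix n n ℂ) : ℝ :=
  ∑ i, Real.sqrt ((Matrix.posSemidef_conjTranspose_mul_self X).isHermitian.eigenvalues i)

variable {aI aO bI bO : Type} [Fintype aI] [Fintype aO] [Fintype bI] [Fintype bO]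
  [DecidableEq aI] [DecidableEq aO] [DecidableEq bI] [DecidableEq bO]
  [Nonempty aI] [Nonempty aO] [Nonempty bI] [Nonempty bO]

/-- `_{A_O} W = (1_{A_O}/dim A_O) ⊗ tr_{A_O} W`, as an operator on the full space. -/
noncomputable def rAO (W : Matrix (aI × aO × bI × bO) (aI × aO × bI × bO) ℂ) :
    Matrix (aI × aO × bI × bO) (aI × aO × bI × bO) ℂ := fun i j =>
  (if i.2.1 = j.2.1 then ((Fintype.card aO : ℂ))⁻¹ else 0) *
    ∑ k : aO, W (i.1, k, i.2.2.1, i.2.2.2) (j.1, k, j.2.2.1, j.2.2.2)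

/-- `_{B_O} W`. -/
noncomputable def rBO (W : Matrix (aI × aO × bI × bO) (aI × aO × bI × bO) ℂ) :
    Matrix (aI × aO × bI × bO) (aI × aO × bI × bO) ℂ := fun i j =>
  (if i.2.2.2 = j.2.2.2 then ((Fintype.card bO : ℂ))⁻¹ else 0) *
    ∑ k : bO, W (i.1, i.2.1, i.2.2.1, k) (j.1, j.2.1, j.2.2.1, k)

/-- `_{A_O B_O} W`. -/
noncomputable def rAOBO (W : Matrix (aI × aO × bI × bO) (aI × aO × bI × bO) ℂ) :
    Matrix (aI × aO × bI × bO) (aI × aO × bI × bO) ℂ := fun i j =>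
  (if i.2.1 = j.2.1 ∧ i.2.2.2 = j.2.2.2 then
      ((Fintype.card aO : ℂ) * (Fintype.card bO : ℂ))⁻¹ else 0) *
    ∑ k : aO, ∑ l : bO, W (i.1, k, i.2.2.1, l) (j.1, k, j.2.2.1, l)

/-- `_{A_I A_O} W`. -/
noncomputable def rAIAO (W : Matrix (aI × aO × bI × bO) (aI × aO × bI × bO) ℂ) :
    Matrix (aI × aO × bI × bO) (aI × aO × bI × bO) ℂ := fun i j =>
  (if i.1 = j.1 ∧ i.2.1 = j.2.1 then
      ((Fintype.card aI : ℂ) * (Fintype.card aO : ℂ))⁻¹ else 0) *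
    ∑ k : aI, ∑ l : aO, W (k, l, i.2.2.1, i.2.2.2) (k, l, j.2.2.1, j.2.2.2)

/-- `_{B_I B_O} W`. -/
noncomputable def rBIBO (W : Matrix (aI × aO × bI × bO) (aI × aO × bI × bO) ℂ) :
    Matrix (aI × aO × bI × bO) (aI × aO × bI × bO) ℂ := fun i j =>
  (if i.2.2.1 = j.2.2.1 ∧ i.2.2.2 = j.2.2.2 then
      ((Fintype.card bI : ℂ) * (Fintype.card bO : ℂ))⁻¹ else 0) *
    ∑ k : bI, ∑ l : bO, W (i.1, i.2.1, k, l) (j.1, j.2.1, k, l)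

/-- `_{A_I A_O B_O} W`. -/
noncomputable def rAIAOBO (W : Matrix (aI × aO × bI × bO) (aI × aO × bI × bO) ℂ) :
    Matrix (aI × aO × bI × bO) (aI × aO × bI × bO) ℂ := fun i j =>
  (if i.1 = j.1 ∧ i.2.1 = j.2.1 ∧ i.2.2.2 = j.2.2.2 then
      ((Fintype.card aI : ℂ) * (Fintype.card aO : ℂ) * (Fintype.card bO : ℂ))⁻¹ else 0) *
    ∑ k : aI, ∑ l : aO, ∑ m : bO, W (k, l, i.2.2.1, m) (k, l, j.2.2.1, m)

/-- `_{A_O B_I B_O} W`. -/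
noncomputable def rAOBIBO (W : Matrix (aI × aO × bI × bO) (aI × aO × bI × bO) ℂ) :
    Matrix (aI × aO × bI × bO) (aI × aO × bI × bO) ℂ := fun i j =>
  (if i.2.1 = j.2.1 ∧ i.2.2.1 = j.2.2.1 ∧ i.2.2.2 = j.2.2.2 then
      ((Fintype.card aO : ℂ) * (Fintype.card bI : ℂ) * (Fintype.card bO : ℂ))⁻¹ else 0) *
    ∑ k : aO, ∑ l : bI, ∑ m : bO, W (i.1, k, l, m) (j.1, k, l, m)

/-- `W` is a process matrix. -/
structure IsProcessMatrix (W : Matrix (aI × aO × bI × bO) (aI × aO × bI × bO) ℂ) : Prop where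
  posSemidef : W.PosSemidef
  condA : rAIAO W = rAIAOBO W
  condB : rBIBO W = rAOBIBO W
  condAB : W = rBO W + rAO W - rAOBO W
  traceEq : W.trace = (Fintype.card aO : ℂ) * (Fintype.card bO : ℂ)

/-- Partial trace over `A_O`. -/
noncomputable def ptrAO (N : Matrix (aI × aO × bI × bO) (aI × aO × bI × bO) ℂ) :
    Matrix (aI × bI × bO) (aI × bI × bO) ℂ := fun i j =>
  ∑ k : aO, N (i.1, k, i.2.1, i.2.2) (j.1, k, j.2.1, j.2.2)

/-- Partial trace over `B_O`. -/
noncomputable def ptrBO (N : Matrix (aI × aO × bI × bO) (aI × aO × bI × bO) ℂ) :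
    Matrix (aI × aO × bI) (aI × aO × bI) ℂ := fun i j =>
  ∑ k : bO, N (i.1, i.2.1, i.2.2, k) (j.1, j.2.1, j.2.2, k)

/-- Partial trace over `A_O ⊗ B_O`. -/
noncomputable def ptrAOBO (N : Matrix (aI × aO × bI × bO) (aI × aO × bI × bO) ℂ) :
    Matrix (aI × bI) (aI × bI) ℂ := fun i j =>
  ∑ k : aO, ∑ l : bO, N (i.1, k, i.2, l) (j.1, k, j.2, l)

/-- `N` is the Choi matrix of a non-signaling channel. -/
structure MemNS (N : Matrix (aI × aO × bI × bO) (aI × aO × bI × bO) ℂ) : Prop where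
  posSemidef : N.PosSemidef
  trChannel : ptrAOBO N = 1
  nsA : ∀ i j : aI × bI × bO, ptrAO N i j =
    (if i.1 = j.1 then ((Fintype.card aI : ℂ))⁻¹ else 0) *
      ∑ m : aI, ptrAO N (m, i.2.1, i.2.2) (m, j.2.1, j.2.2)
  nsB : ∀ i j : aI × aO × bI, ptrBO N i j =
    (if i.2.2 = j.2.2 then ((Fintype.card bI : ℂ))⁻¹ else 0) *
      ∑ m : bI, ptrBO N (i.1, i.2.1, m) (j.1, j.2.1, m)

/-- `sup { ‖√N (W₀ - W₁) √N‖₁ : N ∈ NS }`. -/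
noncomputable def discrBound (W0 W1 : Matrix (aI × aO × bI × bO) (aI × aO × bI × bO) ℂ) : ℝ :=
  sSup { x : ℝ | ∃ N : Matrix (aI × aO × bI × bO) (aI × aO × bI × bO) ℂ, ∃ hN : MemNS N,
    x = traceNorm ((hN.posSemidef.1.eigenvectorUnitary.1 * Matrix.diagonal (fun i => ((Real.sqrt (hN.posSemidef.1.eigenvalues i) : ℝ) : ℂ)) * (star hN.posSemidef.1.eigenvectorUnitary : Matrix (aI × aO × bI × bO) (aI × aO × bI × bO) ℂ)) * (W0 - W1) * (hN.posSemidef.1.eigenvectorUnitary.1 * Matrix.diagonal (fun i => ((Real.sqrt (hN.posSemidef.1.eigenvalues i) : ℝ) : ℂ)) * (star hN.posSemidef.1.eigenvectorUnitary : Matrix (aI × aO × bI × bO) (aI × aO × bI × bO) ℂ))) }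

/-- The optimal probability of discriminating the process matrices `W0` and `W1`
over non-signaling strategies. -/
noncomputable def pSucc (W0 W1 : Matrix (aI × aO × bI × bO) (aI × aO × bI × bO) ℂ) : ℝ :=
  (1/2) * sSup { x : ℝ | ∃ S0 S1 : Matrix (aI × aO × bI × bO) (aI × aO × bI × bO) ℂ,
    S0.PosSemidef ∧ S1.PosSemidef ∧ MemNS (S0 + S1) ∧
    x = ((W0 * S0).trace + (W1 * S1).trace).re }

/-- `W` is a process matrix representing a quantum comb with causal order `A ≺ B`:
`W = W' ⊗ 1_{B_O}` with `tr_{B_I} W' = W'' ⊗ 1_{A_O}`. -/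
def MemCombAB (W : Matrix (aI × aO × bI × bO) (aI × aO × bI × bO) ℂ) : Prop :=
  IsProcessMatrix W ∧
  ∃ W' : Matrix (aI × aO × bI) (aI × aO × bI) ℂ,
    (∀ i j, W i j = (if i.2.2.2 = j.2.2.2 then 1 else 0) *
        W' (i.1, i.2.1, i.2.2.1) (j.1, j.2.1, j.2.2.1)) ∧
    ∃ W'' : Matrix aI aI ℂ, ∀ p q : aI × aO,
      (∑ k : bI, W' (p.1, p.2, k) (q.1, q.2, k)) = (if p.2 = q.2 then 1 else 0) * W'' p.1 q.1

/-- `W` is a process matrix representing a quantum comb with causal order `B ≺ A`: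
`W = W' ⊗ 1_{A_O}` (in the `A_O` slot) with `tr_{A_I} W' = W'' ⊗ 1_{B_O}`. -/
def MemCombBA (W : Matrix (aI × aO × bI × bO) (aI × aO × bI × bO) ℂ) : Prop :=
  IsProcessMatrix W ∧
  ∃ W' : Matrix (aI × bI × bO) (aI × bI × bO) ℂ,
    (∀ i j, W i j = (if i.2.1 = j.2.1 then 1 else 0) *
        W' (i.1, i.2.2.1, i.2.2.2) (j.1, j.2.2.1, j.2.2.2)) ∧
    ∃ W'' : Matrix bI bI ℂ, ∀ p q : bI × bO,
      (∑ k : aI, W' (k, p.1, p.2) (k, q.1, q.2)) = (if p.2 = q.2 then 1 else 0) * W'' p.1 q.1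

/-- `W` is a free process matrix: `W = ρ ⊗ 1_{A_O ⊗ B_O}` for a density operator `ρ`. -/
def MemFree (W : Matrix (aI × aO × bI × bO) (aI × aO × bI × bO) ℂ) : Prop :=
  ∃ ρ : Matrix (aI × bI) (aI × bI) ℂ, ρ.PosSemidef ∧ ρ.trace = 1 ∧
    ∀ i j, W i j = (if i.2.1 = j.2.1 ∧ i.2.2.2 = j.2.2.2 then 1 else 0) *
      ρ (i.1, i.2.2.1) (j.1, j.2.2.1)

/-- `W` is a causally separable process matrix. -/
def MemSep (W : Matrix (aI × aO × bI × bO) (aI × aO × bI × bO) ℂ) : Prop :=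
  ∃ p : ℝ, 0 ≤ p ∧ p ≤ 1 ∧ ∃ W1 W2 : Matrix (aI × aO × bI × bO) (aI × aO × bI × bO) ℂ,
    MemCombAB W1 ∧ MemCombBA W2 ∧ W = (p : ℂ) • W1 + ((1 - p : ℝ) : ℂ) • W2

/-- `(L0, L1)` is an adaptive tester for the causal order `A ≺ B`. -/
structure IsAdaptiveTester (L0 L1 : Matrix (aI × aO × bI × bO) (aI × aO × bI × bO) ℂ) :
    Prop where
  posSemidef0 : L0.PosSemidef
  posSemidef1 : L1.PosSemidef
  comb : ∃ J : Matrix (aI × aO) (aI × aO) ℂ, J.PosSemidef ∧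
    (∀ p q : aI, (∑ k : aO, J (p, k) (q, k)) = if p = q then 1 else 0) ∧
    ∀ i j : aI × aO × bI, ptrBO (L0 + L1) i j =
      (if i.2.2 = j.2.2 then 1 else 0) * J (i.1, i.2.1) (j.1, j.2.1)

/-- The optimal probability of discriminating `W0` and `W1` over adaptive testers. -/
noncomputable def pAdapt (W0 W1 : Matrix (aI × aO × bI × bO) (aI × aO × bI × bO) ℂ) : ℝ :=
  (1/2) * sSup { x : ℝ | ∃ L0 L1 : Matrix (aI × aO × bI × bO) (aI × aO × bI × bO) ℂ,
    IsAdaptiveTester L0 L1 ∧ x = ((W0 * L0).trace + (W1 * L1).trace).re }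


end ProcessMatrices

/-!
The witnesses are the process matrices `W_± = (1 ± (U + V)/√2)/4` of Oreshkov, Costa and
Brukner, with `U = Z^{A_O} Z^{B_I}` and `V = Z^{A_I} X^{B_I} Z^{B_O}`; their midpoint `1/4` is
both an `A ≺ B` and a `B ≺ A` comb. Since `U` and `V` are anticommuting Hermitian involutions,
`(U + V)/√2` is one too, which makes `W_±` positive; the remaining process-matrix conditions
are checked factorwise on the Pauli strings, using that `X` and `Z` are traceless.

Non-separability comes from a causal witness: for a Hermitian involution `S` and `W ≥ 0`,
`|tr(W S)| ≤ tr W` because `1 ± S` are positive. A comb `B ≺ A` is the identity on `A_O`, where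
`U` acts as the traceless `Z`, so `tr(W U) = 0`; likewise `tr(W V) = 0` for a comb `A ≺ B`.
Hence every separable `W` satisfies `|tr(W U)| + |tr(W V)| ≤ 4`, while `W_±` reaches `4√2`.
-/

open scoped Kronecker

namespace ProcessMatrices

section Involution

variable {n : Type*} [Fintype n] [DecidableEq n]

theorem one_add_eq_of_involutive {S : Matrix n n ℂ} (hS : S.IsHermitian) (hSS : S * S = 1) :
    1 + S = (2 : ℂ)⁻¹ • ((1 + S)ᴴ * (1 + S)) := by
  simp only [Matrix.conjTranspose_add, Matrix.conjTranspose_one, hS.eq, add_mul, mul_add, hSS,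
    Matrix.one_mul, Matrix.mul_one]
  module

theorem posSemidef_one_add_of_involutive {S : Matrix n n ℂ} (hS : S.IsHermitian)
    (hSS : S * S = 1) : (1 + S).PosSemidef := by
  rw [one_add_eq_of_involutive hS hSS]
  exact (Matrix.posSemidef_conjTranspose_mul_self _).smul (by norm_num [Complex.nonneg_iff])

theorem trace_mul_one_add_nonneg {M S : Matrix n n ℂ} (hM : M.PosSemidef) (hS : S.IsHermitian)
    (hSS : S * S = 1) : 0 ≤ (M * (1 + S)).trace := by
  rw [one_add_eq_of_involutive hS hSS, Matrix.mul_smul, Matrix.trace_smul, ← Matrix.mul_assoc,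
    Matrix.trace_mul_cycle]
  exact smul_nonneg (by norm_num [Complex.nonneg_iff])
    (hM.mul_mul_conjTranspose_same _).trace_nonneg

theorem abs_re_trace_mul_le {M S : Matrix n n ℂ} (hM : M.PosSemidef) (hS : S.IsHermitian)
    (hSS : S * S = 1) : |(M * S).trace.re| ≤ M.trace.re := by
  have hplus := (Complex.nonneg_iff.mp (trace_mul_one_add_nonneg hM hS hSS)).1
  have hminus := (Complex.nonneg_iff.mp
    (trace_mul_one_add_nonneg hM hS.neg (by rw [neg_mul_neg, hSS]))).1
  simp only [Matrix.mul_add, Matrix.mul_one, Matrix.mul_neg, Matrix.trace_add, Matrix.trace_neg,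
    Complex.add_re, Complex.neg_re] at hplus hminus
  exact abs_le.mpr ⟨by linarith, by linarith⟩

theorem smul_add_mul_self {U V : Matrix n n ℂ} (hUU : U * U = 1) (hVV : V * V = 1)
    (hUV : U * V + V * U = 0) {t : ℝ} (ht : 2 * t ^ 2 = 1) :
    ((t : ℂ) • (U + V)) * ((t : ℂ) • (U + V)) = 1 := by
  have hsq : (U + V) * (U + V) = (2 : ℂ) • 1 := by
    rw [← zero_add ((2 : ℂ) • (1 : Matrix n n ℂ)), ← hUV]
    simp only [add_mul, mul_add, hUU, hVV]
    module
  have ht' : (t : ℂ) * t * 2 = 1 := by exact_mod_cast (by linarith : t * t * 2 = 1)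
  rw [Matrix.smul_mul, Matrix.mul_smul, smul_smul, hsq, smul_smul, ht', one_smul]

end Involution

section Reductions

variable {aI aO bI bO : Type}
  (A : Matrix aI aI ℂ) (B : Matrix aO aO ℂ) (C : Matrix bI bI ℂ) (D : Matrix bO bO ℂ)

theorem one_eq_kronecker [DecidableEq aI] [DecidableEq aO] [DecidableEq bI] [DecidableEq bO] :
    (1 : Matrix (aI × aO × bI × bO) (aI × aO × bI × bO) ℂ) =
      (1 : Matrix aI aI ℂ) ⊗ₖ ((1 : Matrix aO aO ℂ) ⊗ₖ ((1 : Matrix bI bI ℂ) ⊗ₖ 1)) := by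
  simp only [Matrix.one_kronecker_one]

theorem rAO_kronecker [Fintype aO] [DecidableEq aO] :
    rAO (A ⊗ₖ (B ⊗ₖ (C ⊗ₖ D))) =
      ((Fintype.card aO : ℂ)⁻¹ * B.trace) • (A ⊗ₖ ((1 : Matrix aO aO ℂ) ⊗ₖ (C ⊗ₖ D))) := by
  ext ⟨i₁, i₂, i₃, i₄⟩ ⟨j₁, j₂, j₃, j₄⟩
  simp only [rAO, Matrix.kronecker_apply, Matrix.smul_apply, Matrix.one_apply, Matrix.trace,
    Matrix.diag, smul_eq_mul, Finset.mul_sum, Finset.sum_mul]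
  congr! 1
  split_ifs <;> ring

theorem rBO_kronecker [Fintype bO] [DecidableEq bO] :
    rBO (A ⊗ₖ (B ⊗ₖ (C ⊗ₖ D))) =
      ((Fintype.card bO : ℂ)⁻¹ * D.trace) • (A ⊗ₖ (B ⊗ₖ (C ⊗ₖ (1 : Matrix bO bO ℂ)))) := by
  ext ⟨i₁, i₂, i₃, i₄⟩ ⟨j₁, j₂, j₃, j₄⟩
  simp only [rBO, Matrix.kronecker_apply, Matrix.smul_apply, Matrix.one_apply, Matrix.trace,
    Matrix.diag, smul_eq_mul, Finset.mul_sum, Finset.sum_mul]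
  congr! 1
  split_ifs <;> ring

theorem rAOBO_kronecker [Fintype aO] [Fintype bO] [DecidableEq aO] [DecidableEq bO] :
    rAOBO (A ⊗ₖ (B ⊗ₖ (C ⊗ₖ D))) =
      ((Fintype.card aO * Fintype.card bO : ℂ)⁻¹ * (B ⊗ₖ D).trace) •
        (A ⊗ₖ ((1 : Matrix aO aO ℂ) ⊗ₖ (C ⊗ₖ (1 : Matrix bO bO ℂ)))) := by
  ext ⟨i₁, i₂, i₃, i₄⟩ ⟨j₁, j₂, j₃, j₄⟩
  simp only [rAOBO, Matrix.kronecker_apply, Matrix.smul_apply, Matrix.one_apply, Matrix.trace,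
    Matrix.diag, smul_eq_mul, Fintype.sum_prod_type, ite_and, Finset.mul_sum, Finset.sum_mul]
  congr! 2
  split_ifs <;> ring

theorem rAIAO_kronecker [Fintype aI] [Fintype aO] [DecidableEq aI] [DecidableEq aO] :
    rAIAO (A ⊗ₖ (B ⊗ₖ (C ⊗ₖ D))) =
      ((Fintype.card aI * Fintype.card aO : ℂ)⁻¹ * (A ⊗ₖ B).trace) •
        ((1 : Matrix aI aI ℂ) ⊗ₖ ((1 : Matrix aO aO ℂ) ⊗ₖ (C ⊗ₖ D))) := by
  ext ⟨i₁, i₂, i₃, i₄⟩ ⟨j₁, j₂, j₃, j₄⟩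
  simp only [rAIAO, Matrix.kronecker_apply, Matrix.smul_apply, Matrix.one_apply, Matrix.trace,
    Matrix.diag, smul_eq_mul, Fintype.sum_prod_type, ite_and, Finset.mul_sum, Finset.sum_mul]
  congr! 2
  split_ifs <;> ring

theorem rBIBO_kronecker [Fintype bI] [Fintype bO] [DecidableEq bI] [DecidableEq bO] :
    rBIBO (A ⊗ₖ (B ⊗ₖ (C ⊗ₖ D))) =
      ((Fintype.card bI * Fintype.card bO : ℂ)⁻¹ * (C ⊗ₖ D).trace) •
        (A ⊗ₖ (B ⊗ₖ ((1 : Matrix bI bI ℂ) ⊗ₖ (1 : Matrix bO bO ℂ)))) := by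
  ext ⟨i₁, i₂, i₃, i₄⟩ ⟨j₁, j₂, j₃, j₄⟩
  simp only [rBIBO, Matrix.kronecker_apply, Matrix.smul_apply, Matrix.one_apply, Matrix.trace,
    Matrix.diag, smul_eq_mul, Fintype.sum_prod_type, ite_and, Finset.mul_sum, Finset.sum_mul]
  congr! 2
  split_ifs <;> ring

theorem rAIAOBO_kronecker [Fintype aI] [Fintype aO] [Fintype bO] [DecidableEq aI]
    [DecidableEq aO] [DecidableEq bO] :
    rAIAOBO (A ⊗ₖ (B ⊗ₖ (C ⊗ₖ D))) =
      ((Fintype.card aI * Fintype.card aO * Fintype.card bO : ℂ)⁻¹ * (A ⊗ₖ (B ⊗ₖ D)).trace) •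
        ((1 : Matrix aI aI ℂ) ⊗ₖ ((1 : Matrix aO aO ℂ) ⊗ₖ (C ⊗ₖ (1 : Matrix bO bO ℂ)))) := by
  ext ⟨i₁, i₂, i₃, i₄⟩ ⟨j₁, j₂, j₃, j₄⟩
  simp only [rAIAOBO, Matrix.kronecker_apply, Matrix.smul_apply, Matrix.one_apply, Matrix.trace,
    Matrix.diag, smul_eq_mul, Fintype.sum_prod_type, ite_and, Finset.mul_sum, Finset.sum_mul]
  congr! 3
  split_ifs <;> ring

theorem rAOBIBO_kronecker [Fintype aO] [Fintype bI] [Fintype bO] [DecidableEq aO]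
    [DecidableEq bI] [DecidableEq bO] :
    rAOBIBO (A ⊗ₖ (B ⊗ₖ (C ⊗ₖ D))) =
      ((Fintype.card aO * Fintype.card bI * Fintype.card bO : ℂ)⁻¹ * (B ⊗ₖ (C ⊗ₖ D)).trace) •
        (A ⊗ₖ ((1 : Matrix aO aO ℂ) ⊗ₖ ((1 : Matrix bI bI ℂ) ⊗ₖ (1 : Matrix bO bO ℂ)))) := by
  ext ⟨i₁, i₂, i₃, i₄⟩ ⟨j₁, j₂, j₃, j₄⟩
  simp only [rAOBIBO, Matrix.kronecker_apply, Matrix.smul_apply, Matrix.one_apply, Matrix.trace,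
    Matrix.diag, smul_eq_mul, Fintype.sum_prod_type, ite_and, Finset.mul_sum, Finset.sum_mul]
  congr! 3
  split_ifs <;> ring

end Reductions

section Linearity

variable {aI aO bI bO : Type} (W W' : Matrix (aI × aO × bI × bO) (aI × aO × bI × bO) ℂ) (c : ℂ)

theorem rAO_add [Fintype aO] [DecidableEq aO] :
    rAO (W + W') = rAO W + rAO W' := by
  ext; simp only [rAO, Matrix.add_apply, Finset.sum_add_distrib, mul_add]

theorem rAO_smul [Fintype aO] [DecidableEq aO] :
    rAO (c • W) = c • rAO W := by
  ext; simp only [rAO, Matrix.smul_apply, smul_eq_mul, ← Finset.mul_sum]; ring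

theorem rBO_add [Fintype bO] [DecidableEq bO] :
    rBO (W + W') = rBO W + rBO W' := by
  ext; simp only [rBO, Matrix.add_apply, Finset.sum_add_distrib, mul_add]

theorem rBO_smul [Fintype bO] [DecidableEq bO] :
    rBO (c • W) = c • rBO W := by
  ext; simp only [rBO, Matrix.smul_apply, smul_eq_mul, ← Finset.mul_sum]; ring

theorem rAOBO_add [Fintype aO] [Fintype bO] [DecidableEq aO] [DecidableEq bO] :
    rAOBO (W + W') = rAOBO W + rAOBO W' := by
  ext; simp only [rAOBO, Matrix.add_apply, Finset.sum_add_distrib, mul_add]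

theorem rAOBO_smul [Fintype aO] [Fintype bO] [DecidableEq aO] [DecidableEq bO] :
    rAOBO (c • W) = c • rAOBO W := by
  ext; simp only [rAOBO, Matrix.smul_apply, smul_eq_mul, ← Finset.mul_sum]; ring

theorem rAIAO_add [Fintype aI] [Fintype aO] [DecidableEq aI] [DecidableEq aO] :
    rAIAO (W + W') = rAIAO W + rAIAO W' := by
  ext; simp only [rAIAO, Matrix.add_apply, Finset.sum_add_distrib, mul_add]

theorem rAIAO_smul [Fintype aI] [Fintype aO] [DecidableEq aI] [DecidableEq aO] :
    rAIAO (c • W) = c • rAIAO W := by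
  ext; simp only [rAIAO, Matrix.smul_apply, smul_eq_mul, ← Finset.mul_sum]; ring

theorem rBIBO_add [Fintype bI] [Fintype bO] [DecidableEq bI] [DecidableEq bO] :
    rBIBO (W + W') = rBIBO W + rBIBO W' := by
  ext; simp only [rBIBO, Matrix.add_apply, Finset.sum_add_distrib, mul_add]

theorem rBIBO_smul [Fintype bI] [Fintype bO] [DecidableEq bI] [DecidableEq bO] :
    rBIBO (c • W) = c • rBIBO W := by
  ext; simp only [rBIBO, Matrix.smul_apply, smul_eq_mul, ← Finset.mul_sum]; ring

theorem rAIAOBO_add [Fintype aI] [Fintype aO] [Fintype bO] [DecidableEq aI] [DecidableEq aO]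
    [DecidableEq bO] :
    rAIAOBO (W + W') = rAIAOBO W + rAIAOBO W' := by
  ext; simp only [rAIAOBO, Matrix.add_apply, Finset.sum_add_distrib, mul_add]

theorem rAIAOBO_smul [Fintype aI] [Fintype aO] [Fintype bO] [DecidableEq aI] [DecidableEq aO]
    [DecidableEq bO] :
    rAIAOBO (c • W) = c • rAIAOBO W := by
  ext; simp only [rAIAOBO, Matrix.smul_apply, smul_eq_mul, ← Finset.mul_sum]; ring

theorem rAOBIBO_add [Fintype aO] [Fintype bI] [Fintype bO] [DecidableEq aO] [DecidableEq bI]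
    [DecidableEq bO] :
    rAOBIBO (W + W') = rAOBIBO W + rAOBIBO W' := by
  ext; simp only [rAOBIBO, Matrix.add_apply, Finset.sum_add_distrib, mul_add]

theorem rAOBIBO_smul [Fintype aO] [Fintype bI] [Fintype bO] [DecidableEq aO] [DecidableEq bI]
    [DecidableEq bO] :
    rAOBIBO (c • W) = c • rAOBIBO W := by
  ext; simp only [rAOBIBO, Matrix.smul_apply, smul_eq_mul, ← Finset.mul_sum]; ring

end Linearity

section CombTrace

variable {aI aO bI bO : Type} [Fintype aI] [Fintype aO] [Fintype bI] [Fintype bO]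
  (A : Matrix aI aI ℂ) (B : Matrix aO aO ℂ) (C : Matrix bI bI ℂ) (D : Matrix bO bO ℂ)

theorem trace_mul_kronecker_of_eq_one_aO [DecidableEq aO]
    {W : Matrix (aI × aO × bI × bO) (aI × aO × bI × bO) ℂ}
    {W' : Matrix (aI × bI × bO) (aI × bI × bO) ℂ}
    (hW : ∀ i j, W i j = (if i.2.1 = j.2.1 then 1 else 0) *
      W' (i.1, i.2.2.1, i.2.2.2) (j.1, j.2.2.1, j.2.2.2)) :
    (W * (A ⊗ₖ (B ⊗ₖ (C ⊗ₖ D)))).trace = B.trace * (W' * (A ⊗ₖ (C ⊗ₖ D))).trace := by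
  simp only [Matrix.trace, Matrix.diag, Matrix.mul_apply, hW, Fintype.sum_prod_type,
    Matrix.kronecker_apply, ite_mul, one_mul, zero_mul, Finset.sum_ite_irrel,
    Finset.sum_const_zero, Finset.sum_ite_eq, Finset.mem_univ, if_true,
    mul_left_comm _ (B _ _), ← Finset.mul_sum, ← Finset.sum_mul]

theorem trace_mul_kronecker_of_eq_one_bO [DecidableEq bO]
    {W : Matrix (aI × aO × bI × bO) (aI × aO × bI × bO) ℂ}
    {W' : Matrix (aI × aO × bI) (aI × aO × bI) ℂ}
    (hW : ∀ i j, W i j = (if i.2.2.2 = j.2.2.2 then 1 else 0) *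
      W' (i.1, i.2.1, i.2.2.1) (j.1, j.2.1, j.2.2.1)) :
    (W * (A ⊗ₖ (B ⊗ₖ (C ⊗ₖ D)))).trace = D.trace * (W' * (A ⊗ₖ (B ⊗ₖ C))).trace := by
  simp only [Matrix.trace, Matrix.diag, Matrix.mul_apply, hW, Fintype.sum_prod_type,
    Matrix.kronecker_apply, ite_mul, one_mul, zero_mul, Finset.sum_ite_eq, Finset.mem_univ,
    if_true, mul_comm (C _ _) (D _ _), mul_left_comm _ (D _ _), ← Finset.mul_sum,
    ← Finset.sum_mul]

end CombTrace

def pauliX : Matrix (Fin 2) (Fin 2) ℂ := !![0, 1; 1, 0]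

def pauliZ : Matrix (Fin 2) (Fin 2) ℂ := !![1, 0; 0, -1]

theorem isHermitian_pauliX : pauliX.IsHermitian := by
  ext i j; fin_cases i <;> fin_cases j <;> simp [pauliX]

theorem isHermitian_pauliZ : pauliZ.IsHermitian := by
  ext i j; fin_cases i <;> fin_cases j <;> simp [pauliZ]

theorem pauliX_mul_self : pauliX * pauliX = 1 := by
  ext i j; fin_cases i <;> fin_cases j <;> simp [pauliX]

theorem pauliZ_mul_self : pauliZ * pauliZ = 1 := by
  ext i j; fin_cases i <;> fin_cases j <;> simp [pauliZ]

theorem pauliZ_mul_pauliX : pauliZ * pauliX = -(pauliX * pauliZ) := by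
  ext i j; fin_cases i <;> fin_cases j <;> simp [pauliX, pauliZ]

theorem trace_pauliX : pauliX.trace = 0 := by simp [pauliX, Matrix.trace_fin_two]

theorem trace_pauliZ : pauliZ.trace = 0 := by simp [pauliZ, Matrix.trace_fin_two]

abbrev FourQubits := Fin 2 × Fin 2 × Fin 2 × Fin 2

def ocbU : Matrix FourQubits FourQubits ℂ := 1 ⊗ₖ (pauliZ ⊗ₖ (pauliZ ⊗ₖ 1))

def ocbV : Matrix FourQubits FourQubits ℂ := pauliZ ⊗ₖ (1 ⊗ₖ (pauliX ⊗ₖ pauliZ))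

noncomputable def ocb (t : ℝ) : Matrix FourQubits FourQubits ℂ :=
  (4 : ℂ)⁻¹ • (1 + (t : ℂ) • (ocbU + ocbV))

theorem isHermitian_ocbU : ocbU.IsHermitian := by
  simp only [ocbU, Matrix.IsHermitian, Matrix.conjTranspose_kronecker, Matrix.conjTranspose_one,
    isHermitian_pauliZ.eq]

theorem isHermitian_ocbV : ocbV.IsHermitian := by
  simp only [ocbV, Matrix.IsHermitian, Matrix.conjTranspose_kronecker, Matrix.conjTranspose_one,
    isHermitian_pauliZ.eq, isHermitian_pauliX.eq]

theorem ocbU_mul_self : ocbU * ocbU = 1 := by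
  simp only [ocbU, ← Matrix.mul_kronecker_mul, pauliZ_mul_self, Matrix.one_mul,
    Matrix.one_kronecker_one]

theorem ocbV_mul_self : ocbV * ocbV = 1 := by
  simp only [ocbV, ← Matrix.mul_kronecker_mul, pauliZ_mul_self, pauliX_mul_self, Matrix.one_mul,
    Matrix.one_kronecker_one]

theorem ocbU_mul_ocbV_add_ocbV_mul_ocbU : ocbU * ocbV + ocbV * ocbU = 0 := by
  simp only [ocbU, ocbV, ← Matrix.mul_kronecker_mul, Matrix.one_mul, Matrix.mul_one,
    pauliZ_mul_pauliX, ← neg_one_smul ℂ (pauliX * pauliZ), Matrix.smul_kronecker,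
    Matrix.kronecker_smul]
  module

theorem trace_ocbU : ocbU.trace = 0 := by
  simp only [ocbU, Matrix.trace_kronecker, trace_pauliZ, zero_mul, mul_zero]

theorem trace_ocbV : ocbV.trace = 0 := by
  simp only [ocbV, Matrix.trace_kronecker, trace_pauliZ, zero_mul]

theorem trace_ocbV_mul_ocbU : (ocbV * ocbU).trace = 0 := by
  simp only [ocbU, ocbV, ← Matrix.mul_kronecker_mul, Matrix.trace_kronecker, Matrix.mul_one,
    trace_pauliZ, zero_mul]

theorem trace_ocbU_mul_ocbV : (ocbU * ocbV).trace = 0 := by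
  simp only [ocbU, ocbV, ← Matrix.mul_kronecker_mul, Matrix.trace_kronecker, Matrix.one_mul,
    trace_pauliZ, zero_mul]

theorem trace_ocb_mul_ocbU (t : ℝ) : (ocb t * ocbU).trace = 4 * t := by
  simp only [ocb, Matrix.smul_mul, add_mul, Matrix.one_mul, ocbU_mul_self, Matrix.trace_smul,
    Matrix.trace_add, trace_ocbU, trace_ocbV_mul_ocbU, Matrix.trace_one, Fintype.card_prod,
    Fintype.card_fin, smul_eq_mul]
  norm_num
  ring

theorem trace_ocb_mul_ocbV (t : ℝ) : (ocb t * ocbV).trace = 4 * t := by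
  simp only [ocb, Matrix.smul_mul, add_mul, Matrix.one_mul, ocbV_mul_self, Matrix.trace_smul,
    Matrix.trace_add, trace_ocbV, trace_ocbU_mul_ocbV, Matrix.trace_one, Fintype.card_prod,
    Fintype.card_fin, smul_eq_mul]
  norm_num
  ring

theorem posSemidef_ocb {t : ℝ} (ht : 2 * t ^ 2 = 1) : (ocb t).PosSemidef :=
  (posSemidef_one_add_of_involutive
    ((isHermitian_ocbU.add isHermitian_ocbV).smul (Complex.conj_ofReal t))
    (smul_add_mul_self ocbU_mul_self ocbV_mul_self ocbU_mul_ocbV_add_ocbV_mul_ocbU ht)).smul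
    (by norm_num [Complex.nonneg_iff])

theorem posSemidef_ocb_zero : (ocb 0).PosSemidef := by
  simpa [ocb] using Matrix.PosSemidef.one.smul (by norm_num [Complex.nonneg_iff] : (0 : ℂ) ≤ 4⁻¹)

theorem isProcessMatrix_ocb {t : ℝ} (h : (ocb t).PosSemidef) : IsProcessMatrix (ocb t) where
  posSemidef := h
  condA := by
    simp only [ocb, ocbU, ocbV, one_eq_kronecker, smul_add, rAIAO_add, rAIAO_smul, rAIAOBO_add,
      rAIAOBO_smul, rAIAO_kronecker, rAIAOBO_kronecker, Matrix.trace_kronecker, trace_pauliZ,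
      Matrix.trace_one, Fintype.card_fin]
    module
  condB := by
    simp only [ocb, ocbU, ocbV, one_eq_kronecker, smul_add, rBIBO_add, rBIBO_smul, rAOBIBO_add,
      rAOBIBO_smul, rBIBO_kronecker, rAOBIBO_kronecker, Matrix.trace_kronecker, trace_pauliZ,
      trace_pauliX, Matrix.trace_one, Fintype.card_fin]
    module
  condAB := by
    simp only [ocb, ocbU, ocbV, one_eq_kronecker, smul_add, rBO_add, rBO_smul, rAO_add,
      rAO_smul, rAOBO_add, rAOBO_smul, rBO_kronecker, rAO_kronecker, rAOBO_kronecker,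
      Matrix.trace_kronecker, trace_pauliZ, Matrix.trace_one, Fintype.card_fin]
    module
  traceEq := by
    simp only [ocb, Matrix.trace_smul, Matrix.trace_add, trace_ocbU, trace_ocbV, Matrix.trace_one,
      Fintype.card_prod, Fintype.card_fin]
    norm_num

theorem ocb_zero_apply (i j : FourQubits) : ocb 0 i j = if i = j then (4 : ℂ)⁻¹ else 0 := by
  simp [ocb, Matrix.one_apply]

theorem memCombAB_ocb_zero : MemCombAB (ocb 0) := by
  refine ⟨isProcessMatrix_ocb posSemidef_ocb_zero, (4 : ℂ)⁻¹ • 1, fun i j => ?_,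
    (2 : ℂ)⁻¹ • 1, fun p q => ?_⟩
  · simp only [ocb_zero_apply, Matrix.smul_apply, Matrix.one_apply, Prod.ext_iff, smul_eq_mul]
    split_ifs <;> simp_all
  · simp only [Matrix.smul_apply, Matrix.one_apply, Prod.ext_iff, Fin.sum_univ_two, smul_eq_mul]
    split_ifs <;> simp_all
    norm_num

theorem memCombBA_ocb_zero : MemCombBA (ocb 0) := by
  refine ⟨isProcessMatrix_ocb posSemidef_ocb_zero, (4 : ℂ)⁻¹ • 1, fun i j => ?_,
    (2 : ℂ)⁻¹ • 1, fun p q => ?_⟩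
  · simp only [ocb_zero_apply, Matrix.smul_apply, Matrix.one_apply, Prod.ext_iff, smul_eq_mul]
    split_ifs <;> simp_all
  · simp only [Matrix.smul_apply, Matrix.one_apply, Prod.ext_iff, Fin.sum_univ_two, smul_eq_mul]
    split_ifs <;> simp_all
    norm_num

theorem memSep_ocb_zero : MemSep (ocb 0) :=
  ⟨1, zero_le_one, le_rfl, ocb 0, ocb 0, memCombAB_ocb_zero, memCombBA_ocb_zero, by simp⟩

theorem IsProcessMatrix.re_trace_eq_four {W : Matrix FourQubits FourQubits ℂ}
    (hW : IsProcessMatrix W) :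
    W.trace.re = 4 := by
  rw [hW.traceEq]; norm_num

theorem abs_re_trace_mul_ocbU_add_abs_re_trace_mul_ocbV_le {W : Matrix FourQubits FourQubits ℂ}
    (hW : MemSep W) :
    |(W * ocbU).trace.re| + |(W * ocbV).trace.re| ≤ 4 := by
  obtain ⟨p, hp0, hp1, WA, WB, ⟨hA, WA', hWA', -⟩, ⟨hB, WB', hWB', -⟩, rfl⟩ := hW
  have hBU : (WB * ocbU).trace = 0 := by
    rw [ocbU, trace_mul_kronecker_of_eq_one_aO _ _ _ _ hWB', trace_pauliZ, zero_mul]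
  have hAV : (WA * ocbV).trace = 0 := by
    rw [ocbV, trace_mul_kronecker_of_eq_one_bO _ _ _ _ hWA', trace_pauliZ, zero_mul]
  have hAU := abs_re_trace_mul_le hA.posSemidef isHermitian_ocbU ocbU_mul_self
  have hBV := abs_re_trace_mul_le hB.posSemidef isHermitian_ocbV ocbV_mul_self
  rw [hA.re_trace_eq_four] at hAU
  rw [hB.re_trace_eq_four] at hBV
  simp only [add_mul, Matrix.smul_mul, Matrix.trace_add, Matrix.trace_smul, hBU, hAV, smul_eq_mul,
    mul_zero, add_zero, zero_add, Complex.re_ofReal_mul, abs_mul, abs_of_nonneg hp0,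
    abs_of_nonneg (sub_nonneg.mpr hp1)]
  nlinarith

theorem not_memSep_ocb {t : ℝ} (ht : 2 * t ^ 2 = 1) : ¬ MemSep (ocb t) := fun h => by
  have := abs_re_trace_mul_ocbU_add_abs_re_trace_mul_ocbV_le h
  rw [trace_ocb_mul_ocbU, trace_ocb_mul_ocbV] at this
  norm_num [abs_mul] at this
  nlinarith [sq_abs t, abs_nonneg t]

theorem ocb_midpoint (t : ℝ) :
    ((1 / 2 : ℝ) : ℂ) • ocb t + ((1 - 1 / 2 : ℝ) : ℂ) • ocb (-t) = ocb 0 := by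
  simp only [ocb]
  push_cast
  module

/-- With all four spaces equal to `ℂ²`, the set of causally
non-separable process matrices is not convex: there exist causally non-separable
process matrices whose convex combination is a causally separable process matrix. -/
theorem statement14 :
    ∃ (W1 W2 : Matrix (Fin 2 × Fin 2 × Fin 2 × Fin 2) (Fin 2 × Fin 2 × Fin 2 × Fin 2) ℂ)
      (p : ℝ),
      IsProcessMatrix W1 ∧ ¬ MemSep W1 ∧ IsProcessMatrix W2 ∧ ¬ MemSep W2 ∧
      0 ≤ p ∧ p ≤ 1 ∧
      IsProcessMatrix ((p : ℂ) • W1 + ((1 - p : ℝ) : ℂ) • W2) ∧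
      MemSep ((p : ℂ) • W1 + ((1 - p : ℝ) : ℂ) • W2) := by
  set s : ℝ := (Real.sqrt 2)⁻¹
  have hs : 2 * s ^ 2 = 1 := by
    rw [inv_pow, Real.sq_sqrt zero_le_two]; norm_num
  have hs' : 2 * (-s) ^ 2 = 1 := by rwa [neg_sq]
  refine ⟨ocb s, ocb (-s), 1 / 2, isProcessMatrix_ocb (posSemidef_ocb hs), not_memSep_ocb hs,
    isProcessMatrix_ocb (posSemidef_ocb hs'), not_memSep_ocb hs', by norm_num, by norm_num, ?_⟩
  rw [ocb_midpoint]
  exact ⟨isProcessMatrix_ocb posSemidef_ocb_zero, memSep_ocb_zero⟩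

end ProcessMatrices
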